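/- arXiv:1908.02394 — 6 statements merged into one kernel-verified Lean document; each statement's English description precedes it below -/
import Mathlib

section
/- Let P and Q be integers and let U : ℕ → ℤ be the Lucas sequence defined by U(0) = 0, U(1) = 1, and U(n) = P·U(n-1) − Q·U(n-2) for n ≥ 2. Set Δ = P² − 4Q. Then for every prime p not dividing 2QΔ, p divides U(p − (Δ/p)), where (Δ/p) is the Legendre symbol, and p − (Δ/p) is interpreted as a natural number. -/
/-!
Over a field `K` of characteristic `p` containing the roots `α, β` of `X² - P X + Q`, Binet's
formula reads `U n * (α - β) = αⁿ - βⁿ`. The Frobenius `x ↦ xᵖ` fixes `α + β = P`, and since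
`(α - β)² = Δ`, Euler's criterion gives `(α - β)ᵖ = (Δ/p) (α - β)`. So Frobenius fixes `α` and `β`
when `(Δ/p) = 1`, whence `α^(p-1) = 1 = β^(p-1)`, and swaps them when `(Δ/p) = -1`, whence
`α^(p+1) = α β = β^(p+1)`. Either way `U (p - (Δ/p))` vanishes in `K`, i.e. modulo `p`.
-/

section Binet

variable {R : Type*} [CommRing R] {P Q : ℤ} {U : ℕ → ℤ}

theorem lucas_mul_sub_eq_pow_sub_pow (hU0 : U 0 = 0) (hU1 : U 1 = 1)
    (hrec : ∀ n, U (n + 2) = P * U (n + 1) - Q * U n) {α β : R}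
    (hsum : α + β = P) (hprod : α * β = Q) (n : ℕ) :
    (U n : R) * (α - β) = α ^ n - β ^ n := by
  induction n using Nat.twoStepInduction with
  | zero => simp [hU0]
  | one => simp [hU1]
  | more n ih₀ ih₁ =>
    rw [hrec, Int.cast_sub, Int.cast_mul, Int.cast_mul, ← hsum, ← hprod]
    linear_combination (α + β) * ih₁ - α * β * ih₀

end Binet

section CharP

variable {R : Type*} [CommRing R] {p : ℕ} [Fact p.Prime] [CharP R p]

theorem intCast_pow_char (m : ℤ) : (m : R) ^ p = m := by
  rw [← map_intCast (ZMod.castHom dvd_rfl R), ← map_pow, ZMod.pow_card]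

theorem pow_char_of_sq_eq_intCast (hp : p ≠ 2) {Δ : ℤ} {s : R} (hs : s ^ 2 = Δ) :
    s ^ p = legendreSym p Δ * s := by
  have hp_odd : p = 2 * (p / 2) + 1 := (Nat.two_mul_div_two_add_one_of_odd
    ((Fact.out : p.Prime).odd_of_ne_two hp)).symm
  rw [← map_intCast (ZMod.castHom dvd_rfl R), legendreSym.eq_pow, map_pow, map_intCast, ← hs,
    ← pow_mul, ← pow_succ, ← hp_odd]

theorem pow_char_add_pow_char_of_add_eq_intCast {α β : R} {P : ℤ} (hsum : α + β = P) :
    α ^ p + β ^ p = α + β := by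
  rw [← add_pow_char, hsum, intCast_pow_char]

end CharP

section Frobenius

variable {K : Type*} [Field K] {p : ℕ} [Fact p.Prime] [CharP K p] {α β : K} {P Δ : ℤ}

theorem pow_char_eq_of_legendreSym_eq_one (hp : p ≠ 2) (hsum : α + β = P)
    (hΔ : (α - β) ^ 2 = Δ) (hε : legendreSym p Δ = 1) : α ^ p = α ∧ β ^ p = β := by
  have h2 : (2 : K) ≠ 0 := Ring.two_ne_zero (by rwa [ringChar.eq K p])
  have hadd := pow_char_add_pow_char_of_add_eq_intCast (p := p) hsum
  have hsub : α ^ p - β ^ p = α - β := by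
    rw [← sub_pow_char, pow_char_of_sq_eq_intCast hp hΔ, hε, Int.cast_one, one_mul]
  exact ⟨mul_left_cancel₀ h2 (by linear_combination hadd + hsub),
    mul_left_cancel₀ h2 (by linear_combination hadd - hsub)⟩

theorem pow_char_eq_of_legendreSym_eq_neg_one (hp : p ≠ 2) (hsum : α + β = P)
    (hΔ : (α - β) ^ 2 = Δ) (hε : legendreSym p Δ = -1) : α ^ p = β ∧ β ^ p = α := by
  have h2 : (2 : K) ≠ 0 := Ring.two_ne_zero (by rwa [ringChar.eq K p])
  have hadd := pow_char_add_pow_char_of_add_eq_intCast (p := p) hsum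
  have hsub : α ^ p - β ^ p = -(α - β) := by
    rw [← sub_pow_char, pow_char_of_sq_eq_intCast hp hΔ, hε, Int.cast_neg, Int.cast_one,
      neg_one_mul]
  exact ⟨mul_left_cancel₀ h2 (by linear_combination hadd + hsub),
    mul_left_cancel₀ h2 (by linear_combination hadd - hsub)⟩

theorem pow_sub_legendreSym_eq (hp : p ≠ 2) {Q : ℤ} (hsum : α + β = P) (hprod : α * β = Q)
    (hQ : (Q : K) ≠ 0) (hΔ : (α - β) ^ 2 = Δ) (hΔ0 : (Δ : ZMod p) ≠ 0) :
    α ^ (p - legendreSym p Δ).toNat = β ^ (p - legendreSym p Δ).toNat := by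
  have hp1 : 1 ≤ p := (Fact.out : p.Prime).one_le
  rcases legendreSym.eq_one_or_neg_one p hΔ0 with hε | hε
  · obtain ⟨hα, hβ⟩ := pow_char_eq_of_legendreSym_eq_one hp hsum hΔ hε
    have hα0 : α ≠ 0 := left_ne_zero_of_mul (hprod ▸ hQ)
    have hβ0 : β ≠ 0 := right_ne_zero_of_mul (hprod ▸ hQ)
    rw [hε, show ((p : ℤ) - 1).toNat = p - 1 by omega]
    have hα1 : α ^ (p - 1) = 1 :=
      mul_right_cancel₀ hα0 (by rw [← pow_succ, Nat.sub_add_cancel hp1, hα, one_mul])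
    have hβ1 : β ^ (p - 1) = 1 :=
      mul_right_cancel₀ hβ0 (by rw [← pow_succ, Nat.sub_add_cancel hp1, hβ, one_mul])
    rw [hα1, hβ1]
  · obtain ⟨hα, hβ⟩ := pow_char_eq_of_legendreSym_eq_neg_one hp hsum hΔ hε
    rw [hε, show ((p : ℤ) - -1).toNat = p + 1 by omega, pow_succ, pow_succ, hα, hβ, mul_comm]

end Frobenius

theorem exists_add_eq_mul_eq_sub_eq {K : Type*} [Field K] (h2 : (2 : K) ≠ 0) {P Q s : K}
    (hs : s ^ 2 = P ^ 2 - 4 * Q) : ∃ α β : K, α + β = P ∧ α * β = Q ∧ α - β = s :=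
  ⟨(P + s) / 2, (P - s) / 2, by field_simp; ring, by field_simp; linear_combination -hs,
    by field_simp; ring⟩

/-- The Lucas pseudoprimality fact: if `U` is the Lucas sequence with parameters
`P, Q`, `Δ = P² - 4Q`, and `p` is a prime not dividing `2 Q Δ`, then
`p ∣ U (p - (Δ/p))`. -/
theorem lucas_divisibility (P Q : ℤ) (U : ℕ → ℤ)
    (hU0 : U 0 = 0) (hU1 : U 1 = 1)
    (hUrec : ∀ n : ℕ, 2 ≤ n → U n = P * U (n - 1) - Q * U (n - 2))
    (Δ : ℤ) (hΔ : Δ = P ^ 2 - 4 * Q)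
    (p : ℕ) (hp : p.Prime) (hdvd : ¬ (p : ℤ) ∣ 2 * Q * Δ) :
    (p : ℤ) ∣ U (((p : ℤ) - @legendreSym p ⟨hp⟩ Δ).toNat) := by
  have : Fact p.Prime := ⟨hp⟩
  have hp2 : p ≠ 2 := by
    rintro rfl
    exact hdvd (dvd_mul_of_dvd_left (dvd_mul_right _ _) _)
  let K := AlgebraicClosure (ZMod p)
  have h2 : (2 : K) ≠ 0 := Ring.two_ne_zero (by rwa [ringChar.eq K p])
  have hQ : (Q : K) ≠ 0 := by
    rw [Ne, CharP.intCast_eq_zero_iff K p]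
    exact fun h => hdvd (dvd_mul_of_dvd_left (dvd_mul_of_dvd_right h _) _)
  have hpΔ : ¬ (p : ℤ) ∣ Δ := fun h => hdvd (dvd_mul_of_dvd_right h _)
  have hΔ0 : (Δ : ZMod p) ≠ 0 := by rwa [Ne, CharP.intCast_eq_zero_iff (ZMod p) p]
  have hΔK : (Δ : K) ≠ 0 := by rwa [Ne, CharP.intCast_eq_zero_iff K p]
  have hrec (n : ℕ) : U (n + 2) = P * U (n + 1) - Q * U n := hUrec (n + 2) (by omega)
  obtain ⟨s, hs⟩ := IsAlgClosed.exists_pow_nat_eq (Δ : K) two_pos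
  obtain ⟨α, β, hsum, hprod, hdiff⟩ :=
    exists_add_eq_mul_eq_sub_eq h2 (P := (P : K)) (Q := (Q : K))
      (by rw [hs, hΔ, Int.cast_sub, Int.cast_pow, Int.cast_mul, Int.cast_ofNat])
  have hαβ : (α - β) ^ 2 = Δ := hdiff ▸ hs
  have hs0 : α - β ≠ 0 := ne_zero_pow two_ne_zero (hαβ ▸ hΔK)
  rw [← CharP.intCast_eq_zero_iff K p]
  refine (mul_eq_zero.mp ?_).resolve_right hs0
  rw [lucas_mul_sub_eq_pow_sub_pow hU0 hU1 hrec hsum hprod,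
    pow_sub_legendreSym_eq hp2 hsum hprod hQ hαβ hΔ0, sub_self]
end

section
/- Let p be an odd prime, and let a, b, c be integers with Jacobi symbol (c/p) = -1. In the ring (ℤ/pℤ)[x]/(x² − c), setting z = a·x + b, one has z^{p+1} = b² − c·a² (as an element of ℤ/pℤ embedded in the quotient ring). -/
open Polynomial

/-- A prime passes Step 4 of the rQFT: for an odd prime `p` with `(c/p) = -1`,
and `z = a x + b` in `(ℤ/pℤ)[x]/(x² - c)`, one has `z^{p+1} = b² - c a²`. -/
theorem rqft_step4 (p : ℕ) (hp : p.Prime) (hodd : Odd p)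
    (a b c : ℤ) (hc : jacobiSym c p = -1) :
    (AdjoinRoot.of (X ^ 2 - C (c : ZMod p)) (a : ZMod p) *
        AdjoinRoot.root (X ^ 2 - C (c : ZMod p)) +
      AdjoinRoot.of (X ^ 2 - C (c : ZMod p)) (b : ZMod p)) ^ (p + 1)
      = AdjoinRoot.of (X ^ 2 - C (c : ZMod p))
          ((b : ZMod p) ^ 2 - (c : ZMod p) * (a : ZMod p) ^ 2) := by
  haveI : Fact p.Prime := ⟨hp⟩
  set f : (ZMod p)[X] := X ^ 2 - C (c : ZMod p) with hf
  have hdeg2 : f.degree = 2 := by rw [hf]; compute_degree!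
  have hdeg : f.degree ≠ 0 := by rw [hdeg2]; decide
  have hinj := AdjoinRoot.of.injective_of_degree_ne_zero hdeg
  haveI : CharP (AdjoinRoot f) p := charP_of_injective_ringHom hinj p
  set r := AdjoinRoot.root f
  set F := AdjoinRoot.of f
  have hr2 : r ^ 2 = F (c : ZMod p) := by
    have := AdjoinRoot.eval₂_root f
    simp only [hf, eval₂_sub, eval₂_pow, eval₂_X, eval₂_C, sub_eq_zero] at this
    exact this
  have hcpow : (c : ZMod p) ^ (p / 2) = -1 := by
    have h1 : legendreSym p c = -1 := by
      rw [jacobiSym.legendreSym.to_jacobiSym p c]; exact hc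
    have := legendreSym.eq_pow p c
    rw [h1] at this
    push_cast at this
    exact this.symm
  have hrp : r ^ p = -r := by
    obtain ⟨k, hk⟩ := hodd
    have hp2 : p = 2 * (p / 2) + 1 := by omega
    calc r ^ p = (r ^ 2) ^ (p / 2) * r := by rw [← pow_mul, ← pow_succ, ← hp2]
    _ = F ((c : ZMod p) ^ (p / 2)) * r := by rw [hr2, map_pow]
    _ = -r := by rw [hcpow]; simp
  have hzp : (F (a : ZMod p) * r + F (b : ZMod p)) ^ p
      = -(F (a : ZMod p) * r) + F (b : ZMod p) := by
    rw [add_pow_char, mul_pow, hrp, ← map_pow, ← map_pow, ZMod.pow_card, ZMod.pow_card,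
      mul_neg]
  rw [pow_succ, hzp]
  have : F ((b : ZMod p) ^ 2 - (c : ZMod p) * (a : ZMod p) ^ 2)
       = F (b : ZMod p) ^ 2 - F (c : ZMod p) * F (a : ZMod p) ^ 2 := by
    rw [map_sub, map_mul, map_pow, map_pow]
  rw [this, ← hr2]
  ring
end

section
/- Let p be an odd prime, and let a, b, c be integers with Jacobi symbols (c/p) = -1 and ((b² − c·a²)/p) = 1. In the ring (ℤ/pℤ)[x]/(x² − c), setting z = a·x + b, there exists t ∈ ℤ/pℤ such that z^{(p+1)/2} equals the image of t, i.e., z^{(p+1)/2} lies in the base ring ℤ/pℤ. -/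
open Polynomial

/-- A prime passes Step 3 of the rQFT: for an odd prime `p` with `(c/p) = -1`
and `((b² - c a²)/p) = 1`, the element `z = a x + b` of `(ℤ/pℤ)[x]/(x² - c)`
satisfies that `z^{(p+1)/2}` lies in the base ring `ℤ/pℤ`. -/
theorem rqft_step3 (p : ℕ) (hp : p.Prime) (hodd : Odd p)
    (a b c : ℤ) (hc : jacobiSym c p = -1)
    (hbc : jacobiSym (b ^ 2 - c * a ^ 2) p = 1) :
    ∃ t : ZMod p,
      (AdjoinRoot.of (X ^ 2 - C (c : ZMod p)) (a : ZMod p) *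
          AdjoinRoot.root (X ^ 2 - C (c : ZMod p)) +
        AdjoinRoot.of (X ^ 2 - C (c : ZMod p)) (b : ZMod p)) ^ ((p + 1) / 2)
        = AdjoinRoot.of (X ^ 2 - C (c : ZMod p)) t := by
  haveI : Fact p.Prime := ⟨hp⟩
  -- c is a nonsquare mod p
  rw [← jacobiSym.legendreSym.to_jacobiSym] at hc hbc
  have hcns : ¬ IsSquare ((c : ZMod p)) := (legendreSym.eq_neg_one_iff p).mp hc
  -- the polynomial is irreducible
  have hirr : Irreducible (X ^ 2 - C (c : ZMod p)) := by
    apply X_pow_sub_C_irreducible_of_prime Nat.prime_two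
    intro y hy
    exact hcns ⟨y, by rw [← hy]; ring⟩
  haveI : Fact (Irreducible (X ^ 2 - C (c : ZMod p))) := ⟨hirr⟩
  set q : Polynomial (ZMod p) := X ^ 2 - C (c : ZMod p) with hq
  set x := AdjoinRoot.root q
  set z := AdjoinRoot.of q (a : ZMod p) * x + AdjoinRoot.of q (b : ZMod p) with hz
  -- x ^ 2 = c
  have hx2 : x ^ 2 = AdjoinRoot.of q (c : ZMod p) := by
    have h := AdjoinRoot.eval₂_root q
    rw [hq] at h
    simp only [eval₂_sub, eval₂_pow, eval₂_X, eval₂_C, sub_eq_zero] at h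
    exact h
  have hpodd : p % 2 = 1 := Nat.odd_iff.mp hodd
  -- euler: c ^ (p/2) = -1 in ZMod p
  have heuler : (c : ZMod p) ^ (p / 2) = -1 := by
    have := legendreSym.eq_pow p c
    rw [hc] at this
    simpa using this.symm
  -- (b²-ca²) is a nonzero square mod p
  have hbc0 : ((b ^ 2 - c * a ^ 2 : ℤ) : ZMod p) ≠ 0 := by
    intro h
    rw [(legendreSym.eq_zero_iff p _).mpr h] at hbc
    norm_num at hbc
  obtain ⟨s, hs⟩ : IsSquare (((b ^ 2 - c * a ^ 2 : ℤ)) : ZMod p) :=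
    (legendreSym.eq_one_iff p hbc0).mp hbc
  -- char p
  haveI : CharP (AdjoinRoot q) p :=
    charP_of_injective_algebraMap (algebraMap (ZMod p) (AdjoinRoot q)).injective p
  have hp2 : p ≠ 2 := by omega
  -- x ^ p = -x
  have hxp : x ^ p = -x := by
    have h1 : x ^ p = (x ^ 2) ^ (p / 2) * x := by
      rw [← pow_mul, ← pow_succ]
      congr 1
      omega
    rw [h1, hx2, ← map_pow, heuler]
    simp
  -- z ^ p = -a x + b
  have hzp : z ^ p = -(AdjoinRoot.of q (a : ZMod p) * x) + AdjoinRoot.of q (b : ZMod p) := by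
    rw [hz, add_pow_char, mul_pow, hxp, ← map_pow, ← map_pow, ZMod.pow_card, ZMod.pow_card]
    ring
  -- z ^ (p+1) = b² - c a²
  have hzp1 : z ^ (p + 1) = AdjoinRoot.of q (((b ^ 2 - c * a ^ 2 : ℤ)) : ZMod p) := by
    rw [pow_succ, hzp, hz]
    push_cast
    rw [map_sub, map_mul, map_pow, map_pow, ← hx2]
    ring
  -- conclude
  have hsq : (z ^ ((p + 1) / 2)) ^ 2 = (AdjoinRoot.of q s) ^ 2 := by
    rw [← pow_mul]
    have h2 : (p + 1) / 2 * 2 = p + 1 := by omega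
    rw [h2, hzp1, hs, map_mul, sq]
  rcases sq_eq_sq_iff_eq_or_eq_neg.mp hsq with h | h
  · exact ⟨s, h⟩
  · exact ⟨-s, by rw [h, map_neg]⟩
end

section
/- Let p be an odd prime with p > 3, let a, b, c be integers with Jacobi symbols (c/p) = -1 and ((b² − c·a²)/p) = 1, and write p² − 1 = 2^r · s with s odd. In the ring (ℤ/pℤ)[x]/(x² − c), setting z = a·x + b, either z^s = 1, or there exists j with 0 ≤ j ≤ r − 2 such that z^{2^j · s} = −1. -/
open Polynomial

/-- A prime passes Step 5 of the rQFT: for an odd prime `p > 3` with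
`(c/p) = -1` and `((b² - c a²)/p) = 1`, writing `p² - 1 = 2^r s` with `s` odd,
the element `z = a x + b` of `(ℤ/pℤ)[x]/(x² - c)` satisfies `z^s = 1` or
`z^{2^j s} = -1` for some `0 ≤ j ≤ r - 2`. -/
theorem rqft_step5 (p : ℕ) (hp : p.Prime) (hodd : Odd p) (hp3 : 3 < p)
    (a b c : ℤ) (hc : jacobiSym c p = -1)
    (hbc : jacobiSym (b ^ 2 - c * a ^ 2) p = 1)
    (r s : ℕ) (hs : Odd s) (hrs : p ^ 2 - 1 = 2 ^ r * s) :
    (AdjoinRoot.of (X ^ 2 - C (c : ZMod p)) (a : ZMod p) *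
        AdjoinRoot.root (X ^ 2 - C (c : ZMod p)) +
      AdjoinRoot.of (X ^ 2 - C (c : ZMod p)) (b : ZMod p)) ^ s = 1 ∨
    ∃ j : ℕ, j ≤ r - 2 ∧
      (AdjoinRoot.of (X ^ 2 - C (c : ZMod p)) (a : ZMod p) *
          AdjoinRoot.root (X ^ 2 - C (c : ZMod p)) +
        AdjoinRoot.of (X ^ 2 - C (c : ZMod p)) (b : ZMod p)) ^ (2 ^ j * s) = -1 := by
  classical
  haveI : Fact p.Prime := ⟨hp⟩
  obtain ⟨m, hm⟩ := hodd
  have hm2 : p / 2 = m := by omega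
  -- c is not a square mod p
  have hcns : ¬ IsSquare ((c : ℤ) : ZMod p) := by
    rw [← legendreSym.eq_neg_one_iff (p := p), jacobiSym.legendreSym.to_jacobiSym]
    exact hc
  have hirr : Irreducible (X ^ 2 - C (c : ZMod p)) := by
    apply X_pow_sub_C_irreducible_of_prime Nat.prime_two
    intro y hy
    exact hcns ⟨y, by rw [← hy]; ring⟩
  haveI : Fact (Irreducible (X ^ 2 - C (c : ZMod p))) := ⟨hirr⟩
  set F := AdjoinRoot (X ^ 2 - C (c : ZMod p)) with hF
  set φ : ZMod p →+* F := AdjoinRoot.of (X ^ 2 - C (c : ZMod p)) with hφ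
  set x : F := AdjoinRoot.root (X ^ 2 - C (c : ZMod p)) with hx
  set z : F := φ (a : ZMod p) * x + φ (b : ZMod p) with hz
  haveI : CharP F p := charP_of_injective_ringHom φ.injective p
  -- x ^ 2 = φ c
  have hx2 : x ^ 2 = φ ((c : ℤ) : ZMod p) := by
    have h0 := AdjoinRoot.eval₂_root (X ^ 2 - C (c : ZMod p))
    simp only [eval₂_sub, eval₂_pow, eval₂_X, eval₂_C, sub_eq_zero] at h0
    exact h0
  -- Euler's criterion for c
  have hcp : ((c : ℤ) : ZMod p) ^ (p / 2) = -1 := by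
    have h1 := (legendreSym.eq_pow p c).symm
    rw [jacobiSym.legendreSym.to_jacobiSym, hc] at h1
    exact_mod_cast h1
  have hcm : ((c : ℤ) : ZMod p) ^ m = -1 := by rw [← hm2]; exact hcp
  -- x ^ p = -x
  have hxp : x ^ p = -x := by
    have hstep : x ^ p = (x ^ 2) ^ m * x := by
      rw [← pow_mul, ← pow_succ]; congr 1
    rw [hstep, hx2, ← map_pow, hcm, map_neg, map_one, neg_one_mul]
  -- z ^ p
  have hzp : z ^ p = -(φ (a : ZMod p)) * x + φ (b : ZMod p) := by
    have h1 : z ^ p = (φ (a : ZMod p) * x) ^ p + (φ (b : ZMod p)) ^ p :=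
      add_pow_char _ _ p
    rw [h1, mul_pow, ← map_pow, ← map_pow, ZMod.pow_card, ZMod.pow_card, hxp]
    ring
  -- norm computation
  have hN : z ^ (p + 1) = φ (((b ^ 2 - c * a ^ 2 : ℤ) : ZMod p)) := by
    have h1 : z ^ (p + 1) = z ^ p * z := by rw [pow_succ]
    rw [h1, hzp, hz]
    have : (-(φ (a : ZMod p)) * x + φ (b : ZMod p)) *
        (φ (a : ZMod p) * x + φ (b : ZMod p)) =
        φ (b : ZMod p) * φ (b : ZMod p) - φ (a : ZMod p) * φ (a : ZMod p) * x ^ 2 := by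
      ring
    rw [this, hx2, ← map_mul, ← map_mul, ← map_mul, ← map_sub]
    congr 1
    push_cast
    ring
  -- Euler's criterion for the norm
  have hNp : ((b ^ 2 - c * a ^ 2 : ℤ) : ZMod p) ^ (p / 2) = 1 := by
    have h1 := (legendreSym.eq_pow p (b ^ 2 - c * a ^ 2)).symm
    rw [jacobiSym.legendreSym.to_jacobiSym, hbc] at h1
    exact_mod_cast h1
  -- z ^ ((p+1) * (p/2)) = 1
  have key : z ^ ((p + 1) * (p / 2)) = 1 := by
    rw [pow_mul, hN, ← map_pow, hNp, map_one]
  -- r ≥ 1 and arithmetic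
  have hsq2 : p ^ 2 = 2 * ((p + 1) * m) + 1 := by rw [hm]; ring
  have hps : p ^ 2 - 1 = 2 * ((p + 1) * m) := by omega
  have hr1 : 1 ≤ r := by
    by_contra h
    have hr0 : r = 0 := by omega
    rw [hr0, pow_zero, one_mul] at hrs
    obtain ⟨t, ht⟩ := hs
    omega
  have harith : 2 ^ (r - 1) * s = (p + 1) * (p / 2) := by
    have h2r : 2 ^ r = 2 * 2 ^ (r - 1) := by
      rw [← pow_succ']; congr 1; omega
    rw [hm2]
    refine Nat.eq_of_mul_eq_mul_left two_pos ?_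
    calc 2 * (2 ^ (r - 1) * s) = 2 ^ r * s := by rw [h2r]; ring
      _ = p ^ 2 - 1 := hrs.symm
      _ = 2 * ((p + 1) * m) := hps
  have h1 : z ^ (2 ^ (r - 1) * s) = 1 := by rw [harith]; exact key
  -- -1 ≠ 1 in F
  haveI : Fact (2 < p) := ⟨by omega⟩
  have hne1 : (-1 : F) ≠ 1 := CharP.neg_one_ne_one F p
  -- descent
  by_cases h0 : z ^ s = 1
  · left; exact h0
  · right
    have hex : ∃ k, z ^ (2 ^ k * s) = 1 := ⟨r - 1, h1⟩
    set k := Nat.find hex with hk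
    have hk1 : z ^ (2 ^ k * s) = 1 := Nat.find_spec hex
    have hkle : k ≤ r - 1 := Nat.find_le h1
    have hkpos : 0 < k := by
      rcases Nat.eq_zero_or_pos k with h | h
      · exfalso; rw [h, pow_zero, one_mul] at hk1; exact h0 hk1
      · exact h
    refine ⟨k - 1, by omega, ?_⟩
    have hne : z ^ (2 ^ (k - 1) * s) ≠ 1 := Nat.find_min hex (by omega)
    have hsq : z ^ (2 ^ (k - 1) * s) * z ^ (2 ^ (k - 1) * s) = 1 := by
      rw [← pow_add]
      have : 2 ^ (k - 1) * s + 2 ^ (k - 1) * s = 2 ^ k * s := by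
        have : 2 ^ k = 2 ^ (k - 1) + 2 ^ (k - 1) := by
          have h2 : 2 ^ k = 2 ^ (k - 1) * 2 := by rw [← pow_succ]; congr 1; omega
          omega
        rw [this]; ring
      rw [this]; exact hk1
    rcases mul_self_eq_one_iff.mp hsq with h | h
    · exact absurd h hne
    · exact h
end

section
/- Let p be an odd prime, and let b, c be integers with Jacobi symbol ((b² + 4c)/p) = -1. In the ring (ℤ/pℤ)[x]/(x² − b·x − c), letting x denote the image of the indeterminate, one has x^p = b − x. -/
/-! The Frobenius `y ↦ y ^ q` is a `K`-algebra endomorphism of `K[x]/(x² - bx - c)`, so it maps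
the root `x` to a root of the same quadratic, which is `x` or `b - x`. As `b² + 4c` is a nonsquare,
the quotient is a field of degree 2 over `K`, where the Frobenius has order 2; since an algebra map
out of `AdjoinRoot` is determined by the image of the root, `x ^ q = x` is impossible. -/

open Polynomial

theorem eq_or_eq_sub_of_quadratic_eq {R : Type*} [CommRing R] [NoZeroDivisors R] {b c r s : R}
    (hr : r ^ 2 = b * r + c) (hs : s ^ 2 = b * s + c) : s = r ∨ s = b - r := by
  have hfactor : (s - r) * (s - (b - r)) = 0 := by linear_combination hs - hr
  rcases mul_eq_zero.mp hfactor with h | h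
  · exact .inl (sub_eq_zero.mp h)
  · exact .inr (sub_eq_zero.mp h)

namespace Polynomial

theorem isSquare_of_isRoot_X_sq_sub_C_mul_X_sub_C {R : Type*} [CommRing R] {b c a : R}
    (ha : (X ^ 2 - C b * X - C c).IsRoot a) : IsSquare (b ^ 2 + 4 * c) := by
  simp only [IsRoot, eval_sub, eval_pow, eval_mul, eval_X, eval_C] at ha
  exact ⟨2 * a - b, by linear_combination (-4 : R) * ha⟩

theorem natDegree_X_sq_sub_C_mul_X_sub_C {R : Type*} [CommRing R] [Nontrivial R] (b c : R) :
    (X ^ 2 - C b * X - C c).natDegree = 2 := by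
  compute_degree!

theorem irreducible_X_sq_sub_C_mul_X_sub_C {K : Type*} [Field K] {b c : K}
    (hbc : ¬IsSquare (b ^ 2 + 4 * c)) : Irreducible (X ^ 2 - C b * X - C c) :=
  irreducible_of_degree_le_three_of_not_isRoot
    (by rw [natDegree_X_sq_sub_C_mul_X_sub_C]; decide)
    fun _ ha ↦ hbc (isSquare_of_isRoot_X_sq_sub_C_mul_X_sub_C ha)

end Polynomial

namespace AdjoinRoot

variable {K : Type*} [Field K] [Fintype K]

theorem root_pow_card_ne_root {f : K[X]} [Fact (Irreducible f)] (hf : f.natDegree ≠ 1) :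
    root f ^ Fintype.card K ≠ root f := by
  intro h
  let pb := powerBasis (Fact.out : Irreducible f).ne_zero
  have : Module.Finite K (AdjoinRoot f) := pb.finite
  have : Finite (AdjoinRoot f) := Module.finite_of_finite K
  have hfrob : FiniteField.frobeniusAlgHom K (AdjoinRoot f) = 1 := algHom_ext h
  have horder := FiniteField.orderOf_frobeniusAlgHom K (AdjoinRoot f)
  rw [hfrob, orderOf_one, pb.finrank, powerBasis_dim] at horder
  exact hf horder.symm

theorem root_pow_card_eq_sub_root {b c : K} (hbc : ¬IsSquare (b ^ 2 + 4 * c)) :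
    root (X ^ 2 - C b * X - C c) ^ Fintype.card K
      = of (X ^ 2 - C b * X - C c) b - root (X ^ 2 - C b * X - C c) := by
  set f := X ^ 2 - C b * X - C c
  have : Fact (Irreducible f) := ⟨irreducible_X_sq_sub_C_mul_X_sub_C hbc⟩
  have hroot : root f ^ 2 = of f b * root f + of f c := by
    have h := eval₂_root f
    simp only [f, eval₂_sub, eval₂_mul, eval₂_pow, eval₂_X, eval₂_C] at h
    linear_combination h
  have hconj : (root f ^ Fintype.card K) ^ 2 = of f b * root f ^ Fintype.card K + of f c := by
    simpa only [map_add, map_mul, map_pow, ← algebraMap_eq, AlgHom.commutes,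
      FiniteField.coe_frobeniusAlgHom] using
      congrArg (FiniteField.frobeniusAlgHom K (AdjoinRoot f)) hroot
  exact (eq_or_eq_sub_of_quadratic_eq hroot hconj).resolve_left
    (root_pow_card_ne_root ((natDegree_X_sq_sub_C_mul_X_sub_C b c).trans_ne (by decide)))

end AdjoinRoot

theorem qft_frobenius_general (p : ℕ) (hp : p.Prime)
    (b c : ℤ) (hbc : jacobiSym (b ^ 2 + 4 * c) p = -1) :
    (AdjoinRoot.root (X ^ 2 - C (b : ZMod p) * X - C (c : ZMod p))) ^ p
      = AdjoinRoot.of (X ^ 2 - C (b : ZMod p) * X - C (c : ZMod p)) (b : ZMod p)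
        - AdjoinRoot.root (X ^ 2 - C (b : ZMod p) * X - C (c : ZMod p)) := by
  have : Fact p.Prime := ⟨hp⟩
  have hnonsquare : ¬IsSquare ((b : ZMod p) ^ 2 + 4 * (c : ZMod p)) := by
    exact_mod_cast ZMod.nonsquare_of_jacobiSym_eq_neg_one hbc
  simpa only [ZMod.card] using AdjoinRoot.root_pow_card_eq_sub_root hnonsquare

/-- The Frobenius action on which the QFT is based: for an odd prime `p` with
`((b² + 4c)/p) = -1`, in `(ℤ/pℤ)[x]/(x² - bx - c)` one has `x^p = b - x`. -/
theorem qft_frobenius (p : ℕ) (hp : p.Prime) (hodd : Odd p)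
    (b c : ℤ) (hbc : jacobiSym (b ^ 2 + 4 * c) p = -1) :
    (AdjoinRoot.root (X ^ 2 - C (b : ZMod p) * X - C (c : ZMod p))) ^ p
      = AdjoinRoot.of (X ^ 2 - C (b : ZMod p) * X - C (c : ZMod p)) (b : ZMod p)
        - AdjoinRoot.root (X ^ 2 - C (b : ZMod p) * X - C (c : ZMod p)) :=
  qft_frobenius_general p hp b c hbc
end

section
/- Let p be an odd prime, and let b, c be integers with Jacobi symbol ((b² + 4c)/p) = -1. In the ring (ℤ/pℤ)[x]/(x² − b·x − c), letting x denote the image of the indeterminate, one has x^{p+1} = −c (as an element of ℤ/pℤ embedded in the quotient ring). -/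
open Polynomial

/-- A prime passes Step 4 of the QFT: for an odd prime `p` with
`((b² + 4c)/p) = -1`, in `(ℤ/pℤ)[x]/(x² - bx - c)` one has `x^{p+1} = -c`. -/
theorem qft_step4 (p : ℕ) (hp : p.Prime) (hodd : Odd p)
    (b c : ℤ) (hbc : jacobiSym (b ^ 2 + 4 * c) p = -1) :
    (AdjoinRoot.root (X ^ 2 - C (b : ZMod p) * X - C (c : ZMod p))) ^ (p + 1)
      = AdjoinRoot.of (X ^ 2 - C (b : ZMod p) * X - C (c : ZMod p))
          (-(c : ZMod p)) := by
  haveI : Fact p.Prime := ⟨hp⟩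
  have hp2 : p ≠ 2 := by rintro rfl; exact (by decide : ¬ Odd 2) hodd
  set b' : ZMod p := (b : ZMod p) with hb'
  set c' : ZMod p := (c : ZMod p) with hc'
  set f : (ZMod p)[X] := X ^ 2 - C b' * X - C c' with hf
  -- 2 ≠ 0 in ZMod p
  haveI : NeZero (2 : ZMod p) := by
    constructor
    have : ((2 : ℕ) : ZMod p) ≠ 0 := by
      rw [Ne, ZMod.natCast_eq_zero_iff]
      intro h
      have := (Nat.prime_dvd_prime_iff_eq hp Nat.prime_two).mp h
      omega
    exact_mod_cast this
  -- the discriminant is not a square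
  have hns : ¬ IsSquare (b' ^ 2 + 4 * c') := by
    have := ZMod.nonsquare_of_jacobiSym_eq_neg_one hbc
    intro h
    apply this
    have : ((b ^ 2 + 4 * c : ℤ) : ZMod p) = b' ^ 2 + 4 * c' := by push_cast; ring
    rwa [this]
  -- f has no roots
  have hnoroot : ∀ z : ZMod p, ¬ f.IsRoot z := by
    intro z hz
    have hz' : (1 : ZMod p) * (z * z) + (-b') * z + (-c') = 0 := by
      have := hz
      simp only [hf, IsRoot.def, eval_sub, eval_mul, eval_pow, eval_X, eval_C] at this
      linear_combination this
    refine quadratic_ne_zero_of_discrim_ne_sq (fun s hs => ?_) z hz'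
    rw [discrim] at hs
    exact hns ⟨s, by linear_combination hs⟩
  have hmonic : f.Monic := by
    unfold f; monicity!
  have hdeg : f.natDegree = 2 := by
    unfold f; compute_degree!
  have hirr : Irreducible f := by
    rw [irreducible_iff_roots_eq_zero_of_degree_le_three (by omega) (by omega)]
    rw [Multiset.eq_zero_iff_forall_notMem]
    intro z hz
    exact hnoroot z ((mem_roots hmonic.ne_zero).mp hz)
  haveI : Fact (Irreducible f) := ⟨hirr⟩
  haveI : CharP (AdjoinRoot f) p :=
    charP_of_injective_algebraMap (algebraMap (ZMod p) (AdjoinRoot f)).injective p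
  set x : AdjoinRoot f := AdjoinRoot.root f with hxdef
  have hx2 : x ^ 2 = AdjoinRoot.of f b' * x + AdjoinRoot.of f c' := by
    have := AdjoinRoot.eval₂_root f
    simp only [hf, eval₂_sub, eval₂_mul, eval₂_pow, eval₂_X, eval₂_C] at this
    linear_combination this
  -- Frobenius: x^p is also a root of f
  have h1 : (x ^ p) ^ 2 = AdjoinRoot.of f b' * x ^ p + AdjoinRoot.of f c' := by
    have hb : (AdjoinRoot.of f b') ^ p = AdjoinRoot.of f b' := by
      rw [← map_pow, ZMod.pow_card]
    have hc : (AdjoinRoot.of f c') ^ p = AdjoinRoot.of f c' := by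
      rw [← map_pow, ZMod.pow_card]
    calc (x ^ p) ^ 2 = (x ^ 2) ^ p := by rw [← pow_mul, ← pow_mul, Nat.mul_comm]
      _ = (AdjoinRoot.of f b' * x + AdjoinRoot.of f c') ^ p := by rw [hx2]
      _ = (AdjoinRoot.of f b' * x) ^ p + (AdjoinRoot.of f c') ^ p :=
          add_pow_char _ _ p
      _ = AdjoinRoot.of f b' * x ^ p + AdjoinRoot.of f c' := by
          rw [mul_pow, hb, hc]
  have hfac : (x ^ p - x) * (x ^ p + x - AdjoinRoot.of f b') = 0 := by
    linear_combination h1 - hx2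
  rcases mul_eq_zero.mp hfac with h | h
  · -- impossible case : x^p = x
    exfalso
    have hxp : x ^ p = x := by linear_combination h
    have hdvd : f ∣ (X : (ZMod p)[X]) ^ p - X := by
      rw [← AdjoinRoot.mk_eq_zero]
      rw [map_sub, map_pow, AdjoinRoot.mk_X]
      rw [← hxdef, hxp, sub_self]
    -- X^p - X splits into distinct linear factors
    have hroots : ((X : (ZMod p)[X]) ^ p - X).roots = Finset.univ.val := by
      have := FiniteField.roots_X_pow_card_sub_X (ZMod p)
      rwa [ZMod.card] at this
    have hp3 : 1 < p := by have := hp.two_le; omega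
    have hdX : (X : (ZMod p)[X]).degree < ((X : (ZMod p)[X]) ^ p).degree := by
      rw [degree_X, degree_X_pow]
      exact_mod_cast hp3
    have hm : ((X : (ZMod p)[X]) ^ p - X).Monic := by
      apply monic_X_pow_sub
      rw [degree_X]; exact_mod_cast hp3
    have hnd : ((X : (ZMod p)[X]) ^ p - X).natDegree = p := by
      rw [natDegree_eq_of_degree_eq_some]
      rw [degree_sub_eq_left_of_degree_lt hdX, degree_X_pow]
    have hcard : Multiset.card ((X : (ZMod p)[X]) ^ p - X).roots
        = ((X : (ZMod p)[X]) ^ p - X).natDegree := by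
      rw [hroots, hnd]
      simpa using (ZMod.card p).symm
    have hprodeq := prod_multiset_X_sub_C_of_monic_of_roots_card_eq hm hcard
    rw [← hprodeq] at hdvd
    obtain ⟨g, hg, hdvd'⟩ := hirr.prime.exists_mem_multiset_dvd hdvd
    obtain ⟨a, _, rfl⟩ := Multiset.mem_map.mp hg
    have hle := degree_le_of_dvd hdvd' (X_sub_C_ne_zero a)
    rw [degree_X_sub_C] at hle
    have : f.degree = 2 := by
      rw [degree_eq_natDegree hmonic.ne_zero, hdeg]; rfl
    rw [this] at hle
    norm_num at hle
  · -- good case : x^p = b - x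
    have hxp : x ^ p = AdjoinRoot.of f b' - x := by linear_combination h
    rw [pow_succ, hxp, map_neg]
    linear_combination -hx2 - x * (0 : AdjoinRoot f)
end
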